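/- arXiv:2208.04421 — 3 statements merged into one kernel-verified Lean document; each statement's English description precedes it below -/
import Mathlib

section
/- Let Ω ⊂ ℝ^d be a bounded open set, let u ∈ L²(Ω;ℝ^d) be weakly incompressible with no-penetration, let f ∈ L²(Ω), and let T be a steady weak solution of the advection–diffusion equation with velocity u and source f. Let η: ℝ^d → ℝ be continuously differentiable and let v be a weak Neumann solution of Δv = u·∇η − f on Ω. Then ∫_Ω |∇T|² dx ≤ ∫_Ω |∇η|² dx + ∫_Ω |∇v|² dx. -/
/-!
Test the weak equations for `T` and `v` against `θ = T - η` and subtract them: the sources cancel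
and `∫ ∇(T - v)·∇θ = -∫ θ u·∇θ = -½ ∫ u·∇(θ²) = 0` by incompressibility. Thus `∇T - ∇v` and
`∇T - ∇η` are orthogonal in `L²(Ω)`, and then `‖∇η‖² + ‖∇v‖² - ‖∇T‖² = ‖∇η + ∇v - ∇T‖² ≥ 0`.
-/

open MeasureTheory
open scoped RealInnerProductSpace

theorem MeasureTheory.MemLp.inner {α V : Type*} [MeasurableSpace α] {μ : Measure α}
    [NormedAddCommGroup V] [InnerProductSpace ℝ V] {p q r : ENNReal} [ENNReal.HolderTriple p q r]
    {F G : α → V} (hF : MemLp F p μ) (hG : MemLp G q μ) : MemLp (fun x => ⟪F x, G x⟫) r μ :=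
  (innerSL ℝ).memLp_of_bilin r hF hG

theorem Continuous.memLp_restrict_of_isBounded {X F : Type*} [PseudoMetricSpace X] [ProperSpace X]
    [MeasurableSpace X] [OpensMeasurableSpace X] [NormedAddCommGroup F]
    {μ : Measure X} [IsFiniteMeasureOnCompacts μ] {s : Set X} (hs : Bornology.IsBounded s)
    {g : X → F} (hg : Continuous g) (p : ENNReal) : MemLp g p (μ.restrict s) := by
  have : IsFiniteMeasure (μ.restrict s) := isFiniteMeasure_restrict.2 hs.measure_lt_top.ne
  obtain ⟨C, hC⟩ := hs.isCompact_closure.exists_bound_of_continuousOn hg.continuousOn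
  refine MemLp.of_bound hg.aestronglyMeasurable C ?_
  exact ae_restrict_of_ae_restrict_of_subset subset_closure
    (ae_restrict_of_forall_mem isClosed_closure.measurableSet hC)

theorem norm_sq_le_norm_sq_add_norm_sq_add_two_mul_inner {V : Type*} [NormedAddCommGroup V]
    [InnerProductSpace ℝ V] (x y z : V) :
    ‖x‖ ^ 2 ≤ ‖y‖ ^ 2 + ‖z‖ ^ 2 + 2 * ⟪x - z, x - y⟫ := by
  obtain ⟨a, rfl⟩ : ∃ a, z = x - a := ⟨x - z, by abel⟩
  obtain ⟨b, rfl⟩ : ∃ b, y = x - b := ⟨x - y, by abel⟩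
  have h := sq_nonneg ‖x - (a + b)‖
  rw [norm_sub_sq_real, norm_add_sq_real, inner_add_right] at h
  rw [sub_sub_cancel, sub_sub_cancel, norm_sub_sq_real, norm_sub_sq_real]
  linarith

theorem integral_norm_sq_le_add_of_integral_inner_sub_eq_zero {α V : Type*} [MeasurableSpace α]
    {μ : Measure α} [NormedAddCommGroup V] [InnerProductSpace ℝ V] {F G H : α → V}
    (hF : MemLp F 2 μ) (hG : MemLp G 2 μ) (hH : MemLp H 2 μ)
    (horth : ∫ x, ⟪F x - H x, F x - G x⟫ ∂μ = 0) :
    ∫ x, ‖F x‖ ^ 2 ∂μ ≤ (∫ x, ‖G x‖ ^ 2 ∂μ) + ∫ x, ‖H x‖ ^ 2 ∂μ := by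
  have hG2 : Integrable (fun x => ‖G x‖ ^ 2) μ := hG.integrable_norm_pow two_ne_zero
  have hH2 : Integrable (fun x => ‖H x‖ ^ 2) μ := hH.integrable_norm_pow two_ne_zero
  have hGH : Integrable (fun x => ‖G x‖ ^ 2 + ‖H x‖ ^ 2) μ := hG2.add hH2
  have horth1 : Integrable (fun x => 2 * ⟪F x - H x, F x - G x⟫) μ :=
    (memLp_one_iff_integrable.1 <| (hF.sub hH).inner (hF.sub hG)).const_mul 2
  calc ∫ x, ‖F x‖ ^ 2 ∂μ
      ≤ ∫ x, (‖G x‖ ^ 2 + ‖H x‖ ^ 2 + 2 * ⟪F x - H x, F x - G x⟫) ∂μ :=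
        integral_mono (hF.integrable_norm_pow two_ne_zero) (hGH.add horth1)
          fun x => norm_sq_le_norm_sq_add_norm_sq_add_two_mul_inner _ _ _
    _ = (∫ x, ‖G x‖ ^ 2 ∂μ) + ∫ x, ‖H x‖ ^ 2 ∂μ := by
        rw [integral_add hGH horth1, integral_add hG2 hH2, integral_const_mul, horth, mul_zero,
          add_zero]

section Gradient

variable {E : Type*} [NormedAddCommGroup E] [InnerProductSpace ℝ E] [CompleteSpace E]

theorem ContDiff.continuous_gradient {g : E → ℝ} (hg : ContDiff ℝ 1 g) :
    Continuous (gradient g) :=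
  (InnerProductSpace.toDual ℝ E).symm.continuous.comp (hg.continuous_fderiv one_ne_zero)

theorem gradient_fun_sub {f g : E → ℝ} {x : E} (hf : DifferentiableAt ℝ f x)
    (hg : DifferentiableAt ℝ g x) :
    gradient (fun y => f y - g y) x = gradient f x - gradient g x := by
  simp only [gradient, fderiv_fun_sub hf hg, map_sub]

theorem gradient_fun_mul {f g : E → ℝ} {x : E} (hf : DifferentiableAt ℝ f x)
    (hg : DifferentiableAt ℝ g x) :
    gradient (fun y => f y * g y) x = f x • gradient g x + g x • gradient f x := by
  simp only [gradient, fderiv_fun_mul hf hg, map_add, map_smul]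

variable [MeasurableSpace E]

theorem integral_mul_inner_gradient_self_eq_zero {μ : Measure E} {u : E → E}
    (hdiv : ∀ ψ : E → ℝ, ContDiff ℝ 1 ψ → ∫ x, ⟪u x, gradient ψ x⟫ ∂μ = 0)
    {θ : E → ℝ} (hθ : ContDiff ℝ 1 θ) :
    ∫ x, θ x * ⟪u x, gradient θ x⟫ ∂μ = 0 := by
  have hsq : ∀ x, ⟪u x, gradient (fun y => θ y * θ y) x⟫ = 2 * (θ x * ⟪u x, gradient θ x⟫) := by
    intro x
    have hθx := hθ.differentiable one_ne_zero x
    rw [gradient_fun_mul hθx hθx, inner_add_right, inner_smul_right]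
    ring
  have h := hdiv _ (hθ.mul hθ)
  simp only [hsq, integral_const_mul] at h
  simpa using h

variable [ProperSpace E] [OpensMeasurableSpace E] {μ : Measure E} [IsFiniteMeasureOnCompacts μ]
  {Ω : Set E} {u : E → E} {f T η v : E → ℝ}

theorem integral_inner_gradient_sub_eq_neg_integral_mul_inner (hΩ : Bornology.IsBounded Ω)
    (hu : MemLp u 2 (μ.restrict Ω)) (hf : MemLp f 2 (μ.restrict Ω)) (hT : ContDiff ℝ 1 T)
    (hTweak : ∀ φ : E → ℝ, ContDiff ℝ 1 φ → ∫ x in Ω, ⟪gradient T x, gradient φ x⟫ ∂μ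
      = ∫ x in Ω, (f x - ⟪u x, gradient T x⟫) * φ x ∂μ)
    (hη : ContDiff ℝ 1 η) (hv : ContDiff ℝ 1 v)
    (hvweak : ∀ φ : E → ℝ, ContDiff ℝ 1 φ → ∫ x in Ω, ⟪gradient v x, gradient φ x⟫ ∂μ
      = - ∫ x in Ω, (⟪u x, gradient η x⟫ - f x) * φ x ∂μ)
    {φ : E → ℝ} (hφ : ContDiff ℝ 1 φ) :
    ∫ x in Ω, ⟪gradient T x - gradient v x, gradient φ x⟫ ∂μ
      = - ∫ x in Ω, φ x * ⟪u x, gradient T x - gradient η x⟫ ∂μ := by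
  have hφ2 : MemLp φ 2 (μ.restrict Ω) := hφ.continuous.memLp_restrict_of_isBounded hΩ 2
  have hgradφ2 := hφ.continuous_gradient.memLp_restrict_of_isBounded (μ := μ) hΩ 2
  have hsrcT : Integrable (fun x => (f x - ⟪u x, gradient T x⟫) * φ x) (μ.restrict Ω) :=
    (hf.sub <| hu.inner <| hT.continuous_gradient.memLp_restrict_of_isBounded hΩ ⊤).integrable_mul
      hφ2
  have hsrcη : Integrable (fun x => (⟪u x, gradient η x⟫ - f x) * φ x) (μ.restrict Ω) :=
    ((hu.inner <| hη.continuous_gradient.memLp_restrict_of_isBounded hΩ ⊤).sub hf).integrable_mul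
      hφ2
  have hdirT : Integrable (fun x => ⟪gradient T x, gradient φ x⟫) (μ.restrict Ω) :=
    memLp_one_iff_integrable.1 <|
      (hT.continuous_gradient.memLp_restrict_of_isBounded hΩ 2).inner hgradφ2
  have hdirv : Integrable (fun x => ⟪gradient v x, gradient φ x⟫) (μ.restrict Ω) :=
    memLp_one_iff_integrable.1 <|
      (hv.continuous_gradient.memLp_restrict_of_isBounded hΩ 2).inner hgradφ2
  calc ∫ x in Ω, ⟪gradient T x - gradient v x, gradient φ x⟫ ∂μ
      = (∫ x in Ω, ⟪gradient T x, gradient φ x⟫ ∂μ)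
          - ∫ x in Ω, ⟪gradient v x, gradient φ x⟫ ∂μ := by
        simp only [inner_sub_left, integral_sub hdirT hdirv]
    _ = (∫ x in Ω, (f x - ⟪u x, gradient T x⟫) * φ x ∂μ)
          + ∫ x in Ω, (⟪u x, gradient η x⟫ - f x) * φ x ∂μ := by
        rw [hTweak φ hφ, hvweak φ hφ, sub_neg_eq_add]
    _ = - ∫ x in Ω, φ x * ⟪u x, gradient T x - gradient η x⟫ ∂μ := by
        rw [← integral_add hsrcT hsrcη, ← integral_neg]
        congr 1 with x
        rw [inner_sub_right]
        ring

theorem integral_inner_gradient_sub_gradient_sub_eq_zero (hΩ : Bornology.IsBounded Ω)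
    (hu : MemLp u 2 (μ.restrict Ω))
    (hdiv : ∀ ψ : E → ℝ, ContDiff ℝ 1 ψ → ∫ x in Ω, ⟪u x, gradient ψ x⟫ ∂μ = 0)
    (hf : MemLp f 2 (μ.restrict Ω)) (hT : ContDiff ℝ 1 T)
    (hTweak : ∀ φ : E → ℝ, ContDiff ℝ 1 φ → ∫ x in Ω, ⟪gradient T x, gradient φ x⟫ ∂μ
      = ∫ x in Ω, (f x - ⟪u x, gradient T x⟫) * φ x ∂μ)
    (hη : ContDiff ℝ 1 η) (hv : ContDiff ℝ 1 v)
    (hvweak : ∀ φ : E → ℝ, ContDiff ℝ 1 φ → ∫ x in Ω, ⟪gradient v x, gradient φ x⟫ ∂μ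
      = - ∫ x in Ω, (⟪u x, gradient η x⟫ - f x) * φ x ∂μ) :
    ∫ x in Ω, ⟪gradient T x - gradient v x, gradient T x - gradient η x⟫ ∂μ = 0 := by
  have hθ : ContDiff ℝ 1 (fun y => T y - η y) := hT.sub hη
  have hgradθ : ∀ x, gradient (fun y => T y - η y) x = gradient T x - gradient η x := fun x =>
    gradient_fun_sub (hT.differentiable one_ne_zero x) (hη.differentiable one_ne_zero x)
  have h := integral_inner_gradient_sub_eq_neg_integral_mul_inner hΩ hu hf hT hTweak hη hv hvweak hθ
  have hθu := integral_mul_inner_gradient_self_eq_zero hdiv hθ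
  simp only [hgradθ] at h hθu
  rw [h, hθu, neg_zero]

end Gradient

theorem dissipation_upper_bound_general {d : ℕ}
    (Ω : Set (EuclideanSpace ℝ (Fin d)))
    (hΩb : Bornology.IsBounded Ω)
    (u : EuclideanSpace ℝ (Fin d) → EuclideanSpace ℝ (Fin d))
    (hu : MemLp u 2 (volume.restrict Ω))
    (hdiv : ∀ ψ : EuclideanSpace ℝ (Fin d) → ℝ, ContDiff ℝ 1 ψ →
      ∫ x in Ω, (inner ℝ (u x) (gradient ψ x) : ℝ) = 0)
    (f : EuclideanSpace ℝ (Fin d) → ℝ)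
    (hf : MemLp f 2 (volume.restrict Ω))
    (T : EuclideanSpace ℝ (Fin d) → ℝ) (hT : ContDiff ℝ 1 T)
    (hTweak : ∀ φ : EuclideanSpace ℝ (Fin d) → ℝ, ContDiff ℝ 1 φ →
      ∫ x in Ω, (inner ℝ (gradient T x) (gradient φ x) : ℝ)
        = ∫ x in Ω, (f x - (inner ℝ (u x) (gradient T x) : ℝ)) * φ x)
    (η : EuclideanSpace ℝ (Fin d) → ℝ) (hη : ContDiff ℝ 1 η)
    (v : EuclideanSpace ℝ (Fin d) → ℝ) (hv : ContDiff ℝ 1 v)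
    (hvweak : ∀ φ : EuclideanSpace ℝ (Fin d) → ℝ, ContDiff ℝ 1 φ →
      ∫ x in Ω, (inner ℝ (gradient v x) (gradient φ x) : ℝ)
        = - ∫ x in Ω, ((inner ℝ (u x) (gradient η x) : ℝ) - f x) * φ x) :
    ∫ x in Ω, ‖gradient T x‖ ^ 2
      ≤ (∫ x in Ω, ‖gradient η x‖ ^ 2) + ∫ x in Ω, ‖gradient v x‖ ^ 2 := by
  have hgrad : ∀ {g : EuclideanSpace ℝ (Fin d) → ℝ}, ContDiff ℝ 1 g →
      MemLp (gradient g) 2 (volume.restrict Ω) := fun hg =>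
    hg.continuous_gradient.memLp_restrict_of_isBounded hΩb 2
  exact integral_norm_sq_le_add_of_integral_inner_sub_eq_zero (hgrad hT) (hgrad hη) (hgrad hv)
    (integral_inner_gradient_sub_gradient_sub_eq_zero hΩb hu hdiv hf hT hTweak hη hv hvweak)

/-- variational upper bound on the thermal dissipation of a steady weak
solution of the advection–diffusion equation, with test function `η` and `v` the weak
Neumann solution of `Δv = u·∇η − f`. -/
theorem dissipation_upper_bound {d : ℕ}
    (Ω : Set (EuclideanSpace ℝ (Fin d)))
    (hΩo : IsOpen Ω) (hΩb : Bornology.IsBounded Ω) (hΩpos : 0 < volume Ω)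
    (u : EuclideanSpace ℝ (Fin d) → EuclideanSpace ℝ (Fin d))
    (hu : MemLp u 2 (volume.restrict Ω))
    (hdiv : ∀ ψ : EuclideanSpace ℝ (Fin d) → ℝ, ContDiff ℝ 1 ψ →
      ∫ x in Ω, (inner ℝ (u x) (gradient ψ x) : ℝ) = 0)
    (f : EuclideanSpace ℝ (Fin d) → ℝ)
    (hf : MemLp f 2 (volume.restrict Ω))
    (T : EuclideanSpace ℝ (Fin d) → ℝ) (hT : ContDiff ℝ 1 T)
    (hTweak : ∀ φ : EuclideanSpace ℝ (Fin d) → ℝ, ContDiff ℝ 1 φ →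
      ∫ x in Ω, (inner ℝ (gradient T x) (gradient φ x) : ℝ)
        = ∫ x in Ω, (f x - (inner ℝ (u x) (gradient T x) : ℝ)) * φ x)
    (η : EuclideanSpace ℝ (Fin d) → ℝ) (hη : ContDiff ℝ 1 η)
    (v : EuclideanSpace ℝ (Fin d) → ℝ) (hv : ContDiff ℝ 1 v)
    (hvweak : ∀ φ : EuclideanSpace ℝ (Fin d) → ℝ, ContDiff ℝ 1 φ →
      ∫ x in Ω, (inner ℝ (gradient v x) (gradient φ x) : ℝ)
        = - ∫ x in Ω, ((inner ℝ (u x) (gradient η x) : ℝ) - f x) * φ x) :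
    ∫ x in Ω, ‖gradient T x‖ ^ 2
      ≤ (∫ x in Ω, ‖gradient η x‖ ^ 2) + ∫ x in Ω, ‖gradient v x‖ ^ 2 :=
  dissipation_upper_bound_general Ω hΩb u hu hdiv f hf T hT hTweak η hη v hv hvweak
end

section
/- Let ℓ > 0 be such that 1/ℓ is a positive integer, and define f(x,y) = (1/2)cos(2y/ℓ) − (1/2)cos(2x/ℓ), u_c(x,y) = (sin(x/ℓ)cos(y/ℓ), −cos(x/ℓ)sin(y/ℓ)) and η(x,y) = −ℓ cos(x/ℓ)cos(y/ℓ) on ℝ². Then: (i) u_c is divergence-free everywhere, i.e. ∂_x(u_c)₁ + ∂_y(u_c)₂ = 0; (ii) u_c solves the pure advection equation u_c·∇η = f at every point of ℝ²; (iii) on the boundary of the square (0,2π)², the normal component of u_c vanishes: (u_c)₁(x,y) = 0 whenever x ∈ {0,2π} and (u_c)₂(x,y) = 0 whenever y ∈ {0,2π}. -/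
open Real

/-! Since `∂ₓη = u₁` and `∂ᵧη = -u₂`, we get `u_c · ∇η = u₁² - u₂² = sin²(x/ℓ) - sin²(y/ℓ)`,
which is `f` by the double-angle formula. The normal component of `u_c` vanishes on the boundary
of `(0, 2π)²` because `2π/ℓ = 2πn` is a multiple of `π`. -/

lemma hasDerivAt_sin_div (ℓ x : ℝ) :
    HasDerivAt (fun t => sin (t / ℓ)) (cos (x / ℓ) / ℓ) x := by
  simpa [div_eq_mul_inv] using ((hasDerivAt_id x).div_const ℓ).sin

lemma hasDerivAt_neg_mul_cos_div_mul {ℓ : ℝ} (hℓ : ℓ ≠ 0) (c x : ℝ) :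
    HasDerivAt (fun t => -(ℓ * cos (t / ℓ) * c)) (sin (x / ℓ) * c) x := by
  refine ((((hasDerivAt_id' x).div_const ℓ).cos.const_mul ℓ).mul_const c).fun_neg.congr_deriv ?_
  field_simp

theorem cellular_flow_divergence_eq_zero (ℓ x y : ℝ) :
    deriv (fun x' => sin (x' / ℓ) * cos (y / ℓ)) x
      + deriv (fun y' => -(cos (x / ℓ) * sin (y' / ℓ))) y = 0 := by
  rw [((hasDerivAt_sin_div ℓ x).mul_const _).deriv,
    ((hasDerivAt_sin_div ℓ y).const_mul (cos (x / ℓ))).fun_neg.deriv]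
  ring

lemma sin_sq_mul_cos_sq_sub_cos_sq_mul_sin_sq (a b : ℝ) :
    sin a ^ 2 * cos b ^ 2 - cos a ^ 2 * sin b ^ 2 = cos (2 * b) / 2 - cos (2 * a) / 2 := by
  simp only [cos_two_mul, cos_sq']
  ring

theorem cellular_flow_advection {ℓ : ℝ} (hℓ : ℓ ≠ 0) (x y : ℝ) :
    sin (x / ℓ) * cos (y / ℓ) * deriv (fun x' => -(ℓ * cos (x' / ℓ) * cos (y / ℓ))) x
      + (-(cos (x / ℓ) * sin (y / ℓ))) * deriv (fun y' => -(ℓ * cos (x / ℓ) * cos (y' / ℓ))) y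
      = (1 / 2) * cos (2 * y / ℓ) - (1 / 2) * cos (2 * x / ℓ) := by
  have deriv_y : deriv (fun y' => -(ℓ * cos (x / ℓ) * cos (y' / ℓ))) y
      = sin (y / ℓ) * cos (x / ℓ) := by
    simp only [mul_right_comm ℓ (cos (x / ℓ))]
    exact (hasDerivAt_neg_mul_cos_div_mul hℓ _ y).deriv
  rw [(hasDerivAt_neg_mul_cos_div_mul hℓ _ x).deriv, deriv_y, mul_div_assoc, mul_div_assoc]
  linear_combination sin_sq_mul_cos_sq_sub_cos_sq_mul_sin_sq (x / ℓ) (y / ℓ)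

lemma sin_int_mul_pi_div_eq_zero {ℓ : ℝ} {n : ℤ} (hℓn : 1 / ℓ = n) (k : ℤ) :
    sin (k * π / ℓ) = 0 := by
  have h : k * π / ℓ = (k * n : ℤ) * π := by
    rw [div_eq_mul_one_div, hℓn]
    push_cast
    ring
  rw [h, sin_int_mul_pi]

lemma sin_div_eq_zero_of_eq_zero_or_eq_two_pi {ℓ t : ℝ} {n : ℤ} (hℓn : 1 / ℓ = n)
    (ht : t = 0 ∨ t = 2 * π) : sin (t / ℓ) = 0 := by
  rcases ht with rfl | rfl
  · simp
  · exact_mod_cast sin_int_mul_pi_div_eq_zero hℓn 2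

theorem cellular_flow_properties_general (ℓ : ℝ) (hℓ : 0 < ℓ)
    (n : ℕ) (hℓn : 1 / ℓ = (n : ℝ)) :
    (∀ x y : ℝ,
      deriv (fun x' => Real.sin (x' / ℓ) * Real.cos (y / ℓ)) x
        + deriv (fun y' => -(Real.cos (x / ℓ) * Real.sin (y' / ℓ))) y = 0)
    ∧ (∀ x y : ℝ,
      Real.sin (x / ℓ) * Real.cos (y / ℓ)
          * deriv (fun x' => -(ℓ * Real.cos (x' / ℓ) * Real.cos (y / ℓ))) x
        + (-(Real.cos (x / ℓ) * Real.sin (y / ℓ)))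
          * deriv (fun y' => -(ℓ * Real.cos (x / ℓ) * Real.cos (y' / ℓ))) y
      = (1 / 2) * Real.cos (2 * y / ℓ) - (1 / 2) * Real.cos (2 * x / ℓ))
    ∧ (∀ x y : ℝ, (x = 0 ∨ x = 2 * π) →
        Real.sin (x / ℓ) * Real.cos (y / ℓ) = 0)
    ∧ (∀ x y : ℝ, (y = 0 ∨ y = 2 * π) →
        -(Real.cos (x / ℓ) * Real.sin (y / ℓ)) = 0) := by
  have hℓn' : 1 / ℓ = ((n : ℤ) : ℝ) := by exact_mod_cast hℓn
  refine ⟨cellular_flow_divergence_eq_zero ℓ, cellular_flow_advection hℓ.ne', ?_, ?_⟩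
  · intro x y hx
    rw [sin_div_eq_zero_of_eq_zero_or_eq_two_pi hℓn' hx, zero_mul]
  · intro x y hy
    rw [sin_div_eq_zero_of_eq_zero_or_eq_two_pi hℓn' hy, mul_zero, neg_zero]

/-- the cellular flow `u_c = (sin(x/ℓ)cos(y/ℓ), −cos(x/ℓ)sin(y/ℓ))` is
divergence-free, solves the pure advection equation `u_c·∇η = f` with
`η = −ℓcos(x/ℓ)cos(y/ℓ)` and `f = ½cos(2y/ℓ) − ½cos(2x/ℓ)`, and satisfies the
no-penetration condition on the boundary of `(0,2π)²`. -/
theorem cellular_flow_properties (ℓ : ℝ) (hℓ : 0 < ℓ)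
    (n : ℕ) (hn : 0 < n) (hℓn : 1 / ℓ = (n : ℝ)) :
    (∀ x y : ℝ,
      deriv (fun x' => Real.sin (x' / ℓ) * Real.cos (y / ℓ)) x
        + deriv (fun y' => -(Real.cos (x / ℓ) * Real.sin (y' / ℓ))) y = 0)
    ∧ (∀ x y : ℝ,
      Real.sin (x / ℓ) * Real.cos (y / ℓ)
          * deriv (fun x' => -(ℓ * Real.cos (x' / ℓ) * Real.cos (y / ℓ))) x
        + (-(Real.cos (x / ℓ) * Real.sin (y / ℓ)))
          * deriv (fun y' => -(ℓ * Real.cos (x / ℓ) * Real.cos (y' / ℓ))) y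
      = (1 / 2) * Real.cos (2 * y / ℓ) - (1 / 2) * Real.cos (2 * x / ℓ))
    ∧ (∀ x y : ℝ, (x = 0 ∨ x = 2 * π) →
        Real.sin (x / ℓ) * Real.cos (y / ℓ) = 0)
    ∧ (∀ x y : ℝ, (y = 0 ∨ y = 2 * π) →
        -(Real.cos (x / ℓ) * Real.sin (y / ℓ)) = 0) :=
  cellular_flow_properties_general ℓ hℓ n hℓn
end

section
/- Let ε > 0, let R_ε = (−√3·ε, √3·ε) × (1/2 − ε, 1/2 + ε) ⊂ ℝ², and let ψ₂(y) = −π/6 − arctan((2y − 1 − 4ε)/(2√3·ε)) be the stream function of the pinching flow inside R_ε, so that the velocity there is u(x,y) = (ψ₂′(y), 0) with ψ₂′(y) = −4√3·ε / (12ε² + (2y − 1 − 4ε)²). Then the kinetic energy of the pinching flow inside the rectangle is independent of ε and equals ∫_{R_ε} |u|² dx dy = ∫_{R_ε} (ψ₂′(y))² dx dy = π/6. -/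
open Real MeasureTheory

/-!
With `a = 2√3ε` and `t = 2y - 1 - 4ε` the speed is `2a / (a² + t²)`, and
`t / (a² + t²) + arctan (t / a) / a` is a primitive of `2a² / (a² + t²)²`. Across the rectangle
`t` runs from `-√3 a` to `-a / √3`; the rational part takes the same value at both ends
(it is invariant under `t ↦ a² / t`), while `arctan (t / a)` rises from `-π/3` to `-π/6`.
So the inner integral is `π / (6a)`, which the width `2√3ε = a` turns into `π/6`.
-/

section Lorentzian

variable {a : ℝ}

theorem hasDerivAt_arctan_div (ha : a ≠ 0) (t : ℝ) :
    HasDerivAt (fun t => arctan (t / a)) (a / (a ^ 2 + t ^ 2)) t := by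
  have hpos : 0 < a ^ 2 + t ^ 2 := by positivity
  convert ((hasDerivAt_id' t).div_const a).arctan using 1
  field_simp

theorem hasDerivAt_div_sq_add_sq_add_arctan_div (ha : a ≠ 0) (t : ℝ) :
    HasDerivAt (fun t => t / (a ^ 2 + t ^ 2) + arctan (t / a) / a)
      (2 * a ^ 2 / (a ^ 2 + t ^ 2) ^ 2) t := by
  have hpos : 0 < a ^ 2 + t ^ 2 := by positivity
  have hden : HasDerivAt (fun t => a ^ 2 + t ^ 2) (2 * t) t := by
    simpa using ((hasDerivAt_id t).pow 2).const_add (a ^ 2)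
  refine (((hasDerivAt_id' t).fun_div hden hpos.ne').add
    ((hasDerivAt_arctan_div ha t).div_const a)).congr_deriv ?_
  field_simp
  ring

theorem integral_two_mul_sq_div_sq_add_sq_sq (ha : a ≠ 0) (r s : ℝ) :
    ∫ t in r..s, 2 * a ^ 2 / (a ^ 2 + t ^ 2) ^ 2
      = (s / (a ^ 2 + s ^ 2) + arctan (s / a) / a)
        - (r / (a ^ 2 + r ^ 2) + arctan (r / a) / a) := by
  have hcont : Continuous fun t : ℝ => 2 * a ^ 2 / (a ^ 2 + t ^ 2) ^ 2 :=
    continuous_const.div (by fun_prop) fun t => by positivity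
  exact intervalIntegral.integral_eq_sub_of_hasDerivAt
    (fun t _ => hasDerivAt_div_sq_add_sq_add_arctan_div ha t) (hcont.intervalIntegrable _ _)

theorem integral_two_mul_sq_div_sq_add_sq_sq_neg_sqrt_three (ha : 0 < a) :
    ∫ t in -(√3 * a)..-(a / √3), 2 * a ^ 2 / (a ^ 2 + t ^ 2) ^ 2 = π / (6 * a) := by
  have hs : 0 < √3 := by positivity
  have hs2 : √3 ^ 2 = 3 := sq_sqrt (by norm_num)
  have hlo : -(√3 * a) / a = -√3 := by field_simp
  have hhi : -(a / √3) / a = -(√3)⁻¹ := by field_simp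
  rw [integral_two_mul_sq_div_sq_add_sq_sq ha.ne', hlo, hhi, arctan_neg, arctan_neg,
    arctan_sqrt_three, arctan_inv_sqrt_three]
  field_simp
  rw [hs2]
  ring

end Lorentzian

section PinchingFlow

variable {ε : ℝ}

theorem hasDerivAt_pinching_stream (hε : 0 < ε) (y : ℝ) :
    HasDerivAt (fun y' => -(π / 6) - arctan ((2 * y' - 1 - 4 * ε) / (2 * √3 * ε)))
      (-(4 * √3 * ε) / (12 * ε ^ 2 + (2 * y - 1 - 4 * ε) ^ 2)) y := by
  have ha : 2 * √3 * ε ≠ 0 := by positivity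
  have hlin : HasDerivAt (fun y' => 2 * y' - 1 - 4 * ε) 2 y := by
    simpa using (((hasDerivAt_id' y).const_mul 2).sub_const 1).sub_const (4 * ε)
  refine (((hasDerivAt_arctan_div ha _).comp y hlin).const_sub (-(π / 6))).congr_deriv ?_
  rw [mul_pow, mul_pow, sq_sqrt (by norm_num : (0 : ℝ) ≤ 3)]
  ring

theorem integral_pinching_speed_sq (hε : 0 < ε) :
    ∫ y in Set.Ioo (1 / 2 - ε) (1 / 2 + ε),
      (-(4 * √3 * ε) / (12 * ε ^ 2 + (2 * y - 1 - 4 * ε) ^ 2)) ^ 2 = π / (12 * √3 * ε) := by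
  set a := 2 * √3 * ε with ha_def
  have ha : 0 < a := by positivity
  have hs2 : √3 ^ 2 = 3 := sq_sqrt (by norm_num)
  have hspeed (y : ℝ) : (-(4 * √3 * ε) / (12 * ε ^ 2 + (2 * y - 1 - 4 * ε) ^ 2)) ^ 2
      = 2 * (2 * a ^ 2 / (a ^ 2 + (2 * y - (1 + 4 * ε)) ^ 2) ^ 2) := by
    have h12 : 12 * ε ^ 2 = a ^ 2 := by rw [ha_def, mul_pow, mul_pow, hs2]; ring
    have h4 : 4 * √3 * ε = 2 * a := by rw [ha_def]; ring
    rw [h12, h4, sub_sub, div_pow, neg_sq]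
    ring
  have hlo : 2 * (1 / 2 - ε) - (1 + 4 * ε) = -(√3 * a) := by
    rw [ha_def]; linear_combination 2 * ε * hs2
  have hhi : 2 * (1 / 2 + ε) - (1 + 4 * ε) = -(a / √3) := by
    rw [ha_def]; field_simp; ring
  rw [← integral_Ioc_eq_integral_Ioo, ← intervalIntegral.integral_of_le (by linarith)]
  simp_rw [hspeed]
  rw [intervalIntegral.integral_const_mul, ← smul_eq_mul,
    intervalIntegral.smul_integral_comp_mul_sub (fun t => 2 * a ^ 2 / (a ^ 2 + t ^ 2) ^ 2),
    hlo, hhi,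
    integral_two_mul_sq_div_sq_add_sq_sq_neg_sqrt_three ha, ha_def]
  ring

end PinchingFlow

/-- the kinetic energy of the pinching flow inside the rectangle
`R_ε = (−√3ε, √3ε) × (1/2−ε, 1/2+ε)` is independent of `ε` and equals `π/6`. The flow
is horizontal with stream function `ψ₂(y) = −π/6 − arctan((2y−1−4ε)/(2√3ε))`, whose
derivative is `ψ₂′(y) = −4√3ε/(12ε² + (2y−1−4ε)²)`. -/
theorem pinching_flow_energy (ε : ℝ) (hε : 0 < ε) :
    (∀ y : ℝ,
      deriv (fun y' => -(π / 6)
          - Real.arctan ((2 * y' - 1 - 4 * ε) / (2 * Real.sqrt 3 * ε))) y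
        = -(4 * Real.sqrt 3 * ε) / (12 * ε ^ 2 + (2 * y - 1 - 4 * ε) ^ 2))
    ∧ (∫ x in Set.Ioo (-(Real.sqrt 3 * ε)) (Real.sqrt 3 * ε),
        ∫ y in Set.Ioo (1 / 2 - ε) (1 / 2 + ε),
          (-(4 * Real.sqrt 3 * ε) / (12 * ε ^ 2 + (2 * y - 1 - 4 * ε) ^ 2)) ^ 2)
      = π / 6 := by
  refine ⟨fun y => (hasDerivAt_pinching_stream hε y).deriv, ?_⟩
  have hs : 0 < √3 := by positivity
  rw [integral_pinching_speed_sq hε, setIntegral_const,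
    Real.volume_real_Ioo_of_le (by nlinarith), smul_eq_mul]
  field_simp
  ring
end
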